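/- arXiv:2110.14759 — 8 statements merged into one kernel-verified Lean document; each statement's English description precedes it below -/
import Mathlib

section
/- For any x in dom f and any α ∈ [0,1], F(x + α(p_x - x)) - F(x) ≤ -α S(x) + K(α)||p_x - x||², where K(α) = ((L_f + σ_g)α² - σ_g α)/2, F = f + g, and S is the conditional gradient norm. -/
open scoped RealInnerProductSpace

lemma concave_first_order_aux {m : ℕ} {D : Set (EuclideanSpace ℝ (Fin m))}
    {φ : EuclideanSpace ℝ (Fin m) → ℝ} {x y : EuclideanSpace ℝ (Fin m)} {d : ℝ}
    (hconc : ConcaveOn ℝ D φ) (hx : x ∈ D) (hy : y ∈ D)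
    (hd : HasDerivAt (fun t : ℝ => φ (x + t • (y - x))) d 0) :
    φ y ≤ φ x + d := by
  set A : ℝ →ᵃ[ℝ] EuclideanSpace ℝ (Fin m) := AffineMap.lineMap x y with hA
  have hψ : ConvexOn ℝ (A ⁻¹' D) ((fun z => -φ z) ∘ A) := hconc.neg.comp_affineMap A
  have h0 : (0 : ℝ) ∈ A ⁻¹' D := by simp [hA, hx]
  have h1 : (1 : ℝ) ∈ A ⁻¹' D := by simp [hA, hy]
  have heq : ((fun z => -φ z) ∘ A) = fun t : ℝ => -φ (x + t • (y - x)) := by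
    funext t
    simp [hA, AffineMap.lineMap_apply, add_comm]
  have hd' : HasDerivAt ((fun z => -φ z) ∘ A) (-d) 0 := by
    rw [heq]; exact hd.neg
  have hs := hψ.le_slope_of_hasDerivAt h0 h1 one_pos hd'
  have hS : slope ((fun z => -φ z) ∘ A) 0 1 = -φ y + φ x := by
    simp [slope, hA, Function.comp]
  rw [hS] at hs
  linarith

lemma semiconcave_descent {m : ℕ} {D : Set (EuclideanSpace ℝ (Fin m))}
    {f : EuclideanSpace ℝ (Fin m) → ℝ} {fx : EuclideanSpace ℝ (Fin m)} {Lf : ℝ}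
    (hconc : ConcaveOn ℝ D (fun x => f x - Lf / 2 * ‖x‖ ^ 2))
    {x y : EuclideanSpace ℝ (Fin m)} (hx : x ∈ D) (hy : y ∈ D)
    (hgrad : HasGradientAt f fx x) :
    f y ≤ f x + ⟪fx, y - x⟫ + Lf / 2 * ‖y - x‖ ^ 2 := by
  set v : EuclideanSpace ℝ (Fin m) := y - x with hv
  have hA : HasDerivAt (fun t : ℝ => x + t • v) v 0 := by
    simpa using ((hasDerivAt_id (0 : ℝ)).smul_const v).const_add x
  have hF : HasFDerivAt f (InnerProductSpace.toDual ℝ _ fx) x :=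
    hasGradientAt_iff_hasFDerivAt.mp hgrad
  have hF' : HasFDerivAt f (InnerProductSpace.toDual ℝ _ fx) ((fun t : ℝ => x + t • v) 0) := by
    simpa using hF
  have hf : HasDerivAt (fun t : ℝ => f (x + t • v)) ⟪fx, v⟫ 0 := by
    simpa [Function.comp_def, InnerProductSpace.toDual_apply_apply] using hF'.comp_hasDerivAt 0 hA
  have hpoly : (fun t : ℝ => ‖x + t • v‖ ^ 2)
      = fun t : ℝ => ‖x‖ ^ 2 + 2 * (t * ⟪x, v⟫) + t ^ 2 * ‖v‖ ^ 2 := by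
    funext t
    rw [norm_add_sq_real, real_inner_smul_right, norm_smul]
    simp [mul_pow, sq_abs]
  have hn : HasDerivAt (fun t : ℝ => ‖x + t • v‖ ^ 2) (2 * ⟪x, v⟫) 0 := by
    rw [hpoly]
    have h1 : HasDerivAt (fun t : ℝ => t * ⟪x, v⟫) ⟪x, v⟫ 0 := by
      simpa using (hasDerivAt_id (0 : ℝ)).mul_const ⟪x, v⟫
    have h2 : HasDerivAt (fun t : ℝ => t ^ 2 * ‖v‖ ^ 2) 0 0 := by
      simpa using (hasDerivAt_pow 2 (0 : ℝ)).mul_const (‖v‖ ^ 2)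
    simpa [Pi.add_def] using ((hasDerivAt_const (0 : ℝ) (‖x‖ ^ 2)).add (h1.const_mul 2)).add h2
  have hd : HasDerivAt (fun t : ℝ => f (x + t • v) - Lf / 2 * ‖x + t • v‖ ^ 2)
      (⟪fx, v⟫ - Lf / 2 * (2 * ⟪x, v⟫)) 0 := hf.sub (hn.const_mul (Lf / 2))
  have key := concave_first_order_aux hconc hx hy hd
  have e1 : ‖y - x‖ ^ 2 = ‖y‖ ^ 2 - 2 * ⟪y, x⟫ + ‖x‖ ^ 2 := norm_sub_sq_real y x
  have e2 : ⟪x, v⟫ = ⟪x, y⟫ - ‖x‖ ^ 2 := by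
    rw [hv, inner_sub_right, real_inner_self_eq_norm_sq]
  have e3 : ⟪y, x⟫ = ⟪x, y⟫ := real_inner_comm x y
  rw [e1, e3]
  rw [e2] at key
  linarith


/-- Fundamental descent lemma for generalized Frank-Wolfe. -/
theorem generalized_FW_descent_lemma {m : ℕ}
    {D S : Set (EuclideanSpace ℝ (Fin m))}
    {f g : EuclideanSpace ℝ (Fin m) → ℝ}
    {f' : EuclideanSpace ℝ (Fin m) → EuclideanSpace ℝ (Fin m)}
    {Lf σg : ℝ} (hLf : 0 ≤ Lf) (hσg : 0 ≤ σg)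
    (hDopen : IsOpen D) (hDconv : Convex ℝ D)
    (hdiff : ∀ x ∈ D, HasGradientAt f (f' x) x)
    (hconc : ConcaveOn ℝ D (fun x => f x - Lf / 2 * ‖x‖ ^ 2))
    (hScompact : IsCompact S) (hSconv : Convex ℝ S) (hSD : S ⊆ D)
    (hstrong : ConvexOn ℝ S (fun x => g x - σg / 2 * ‖x‖ ^ 2))
    {x p : EuclideanSpace ℝ (Fin m)} (hx : x ∈ S) (hpS : p ∈ S)
    (hmin : ∀ q ∈ S, ⟪f' x, p⟫ + g p ≤ ⟪f' x, q⟫ + g q)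
    {α : ℝ} (hα0 : 0 ≤ α) (hα1 : α ≤ 1) :
    (f (x + α • (p - x)) + g (x + α • (p - x))) - (f x + g x) ≤
      -α * (⟪f' x, x - p⟫ + g x - g p) +
        ((Lf + σg) * α ^ 2 - σg * α) / 2 * ‖p - x‖ ^ 2 := by
  set y : EuclideanSpace ℝ (Fin m) := x + α • (p - x) with hy
  have hycomb : y = (1 - α) • x + α • p := by
    rw [hy]; module
  have hyS : y ∈ S := by
    rw [hycomb]
    exact hSconv hx hpS (by linarith) hα0 (by ring)
  -- f part
  have hfdesc : f y ≤ f x + ⟪f' x, y - x⟫ + Lf / 2 * ‖y - x‖ ^ 2 :=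
    semiconcave_descent hconc (hSD hx) (hSD hyS) (hdiff x (hSD hx))
  have hyx : y - x = α • (p - x) := by rw [hy]; abel
  have hin : ⟪f' x, y - x⟫ = α * ⟪f' x, p - x⟫ := by
    rw [hyx, real_inner_smul_right]
  have hnrm : ‖y - x‖ ^ 2 = α ^ 2 * ‖p - x‖ ^ 2 := by
    rw [hyx, norm_smul]
    simp [mul_pow, sq_abs]
  -- g part : strong convexity
  have hsc : StrongConvexOn S σg g := strongConvexOn_iff_convex.mpr hstrong
  have hgineq := hsc.2 hx hpS (by linarith : (0:ℝ) ≤ 1 - α) hα0 (by ring)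
  rw [← hycomb] at hgineq
  simp only [smul_eq_mul] at hgineq
  have hxp : ‖x - p‖ = ‖p - x‖ := norm_sub_rev x p
  rw [hxp] at hgineq
  -- inner product rewrites
  have hip : ⟪f' x, p - x⟫ = -(⟪f' x, x - p⟫) := by
    rw [← inner_neg_right]
    congr 1
    abel
  rw [hin, hnrm, hip] at hfdesc
  nlinarith [hfdesc, hgineq]
end

section
/- In generalized Frank-Wolfe with constant stepsize α and convex g, min_{0≤i≤k} S(x^(i)) ≤ Δ₀/(α(k+1)) + L_f Ω² α / 2, where Δ₀ = F(x^(0)) - F*, Ω is the diameter of dom g, and S is the conditional gradient norm. -/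
open scoped RealInnerProductSpace

/-- Gradient upper bound for a semi-concave function. -/
lemma FW_semiconcave_upper_bound {m : ℕ} {D : Set (EuclideanSpace ℝ (Fin m))}
    {f : EuclideanSpace ℝ (Fin m) → ℝ}
    {f' : EuclideanSpace ℝ (Fin m) → EuclideanSpace ℝ (Fin m)} {Lf : ℝ}
    (hDconv : Convex ℝ D)
    (hdiff : ∀ x ∈ D, HasGradientAt f (f' x) x)
    (hconc : ConcaveOn ℝ D (fun x => f x - Lf / 2 * ‖x‖ ^ 2))
    {x y : EuclideanSpace ℝ (Fin m)} (hx : x ∈ D) (hy : y ∈ D) :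
    f y ≤ f x + ⟪f' x, y - x⟫ + Lf / 2 * ‖y - x‖ ^ 2 := by
  set v := y - x with hv
  set φ : ℝ → ℝ := fun t => f (x + t • v) - Lf / 2 * ‖x + t • v‖ ^ 2 with hφ
  have hline : HasDerivAt (fun t : ℝ => x + t • v) v 0 := by
    simpa using ((hasDerivAt_id (0 : ℝ)).smul_const v).const_add x
  have hx0 : x + (0 : ℝ) • v = x := by simp
  have hfc : HasDerivAt (fun t : ℝ => f (x + t • v)) ⟪f' x, v⟫ 0 := by
    have h1 : HasFDerivAt f (InnerProductSpace.toDual ℝ _ (f' x)) (x + (0 : ℝ) • v) := by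
      rw [hx0]; exact (hdiff x hx).hasFDerivAt
    have := h1.comp_hasDerivAt (0 : ℝ) hline
    simp [Function.comp, InnerProductSpace.toDual_apply_apply] at this; exact this
  have hnc : HasDerivAt (fun t : ℝ => ‖x + t • v‖ ^ 2) (2 * ⟪x, v⟫) 0 := by
    have h2 : HasDerivAt (fun t : ℝ => (⟪x + t • v, x + t • v⟫ : ℝ))
        (⟪x + (0 : ℝ) • v, v⟫ + ⟪v, x + (0 : ℝ) • v⟫) 0 :=
      HasDerivAt.inner ℝ hline hline
    have h3 : (fun t : ℝ => (⟪x + t • v, x + t • v⟫ : ℝ)) =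
        fun t : ℝ => ‖x + t • v‖ ^ 2 := by
      funext t; rw [real_inner_self_eq_norm_sq]
    rw [h3, hx0] at h2
    have h4 : ⟪x, v⟫ + ⟪v, x⟫ = 2 * ⟪x, v⟫ := by rw [real_inner_comm v x]; ring
    rwa [h4] at h2
  have hφd : HasDerivAt φ (⟪f' x, v⟫ - Lf / 2 * (2 * ⟪x, v⟫)) 0 :=
    hfc.sub (hnc.const_mul (Lf / 2))
  have hφ0 : φ 0 = f x - Lf / 2 * ‖x‖ ^ 2 := by simp [hφ]
  -- slopes are bounded below by h y - h x by concavity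
  have hslope : ∀ t : ℝ, t ∈ Set.Ioc (0 : ℝ) 1 →
      (f y - Lf / 2 * ‖y‖ ^ 2) - (f x - Lf / 2 * ‖x‖ ^ 2) ≤ slope φ 0 t := by
    intro t ht
    have ht0 : 0 < t := ht.1
    have hcomb : x + t • v = (1 - t) • x + t • y := by rw [hv]; module
    have hcc := hconc.2 hx hy (by linarith [ht.2] : (0:ℝ) ≤ 1 - t) ht0.le (by ring)
    rw [← hcomb] at hcc
    have hφt : (1 - t) * (f x - Lf / 2 * ‖x‖ ^ 2)
        + t * (f y - Lf / 2 * ‖y‖ ^ 2) ≤ φ t := by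
      simpa [hφ, smul_eq_mul] using hcc
    have hs : slope φ 0 t = (φ t - φ 0) / t := by
      rw [slope_def_field]; ring_nf
    rw [hs, le_div_iff₀ ht0]
    nlinarith [hφt, hφ0]
  -- take the limit along 𝓝[>] 0
  have htend : Filter.Tendsto (slope φ 0) (nhdsWithin 0 (Set.Ioi 0))
      (nhds (⟪f' x, v⟫ - Lf / 2 * (2 * ⟪x, v⟫))) := by
    have := hasDerivAt_iff_tendsto_slope.mp hφd
    exact this.mono_left (nhdsWithin_mono _ (fun t ht => Set.mem_compl_singleton_iff.mpr
      (ne_of_gt ht)))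
  have hev : ∀ᶠ t in nhdsWithin 0 (Set.Ioi 0),
      (f y - Lf / 2 * ‖y‖ ^ 2) - (f x - Lf / 2 * ‖x‖ ^ 2) ≤ slope φ 0 t :=
    Filter.eventually_of_mem (Ioc_mem_nhdsGT_of_mem ⟨le_refl 0, zero_lt_one⟩) hslope
  have hlim : (f y - Lf / 2 * ‖y‖ ^ 2) - (f x - Lf / 2 * ‖x‖ ^ 2) ≤
      ⟪f' x, v⟫ - Lf / 2 * (2 * ⟪x, v⟫) :=
    ge_of_tendsto htend hev
  -- rearrange using the parallelogram-type identity
  have hid : ‖v‖ ^ 2 = ‖y‖ ^ 2 - 2 * ⟪x, v⟫ - ‖x‖ ^ 2 := by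
    have h5 : (⟪x, v⟫ : ℝ) = ⟪x, y⟫ - ‖x‖ ^ 2 := by
      rw [hv, inner_sub_right, real_inner_self_eq_norm_sq]
    have h6 : ‖v‖ ^ 2 = ‖y‖ ^ 2 - 2 * ⟪y, x⟫ + ‖x‖ ^ 2 := by
      rw [hv, norm_sub_sq_real]
    rw [h5, h6, real_inner_comm y x]; ring
  have hid2 : Lf / 2 * ‖v‖ ^ 2 = Lf / 2 * (‖y‖ ^ 2 - 2 * ⟪x, v⟫ - ‖x‖ ^ 2) := by
    rw [hid]
  have hid3 : Lf / 2 * (‖y‖ ^ 2 - 2 * ⟪x, v⟫ - ‖x‖ ^ 2) =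
      Lf / 2 * ‖y‖ ^ 2 - Lf / 2 * (2 * ⟪x, v⟫) - Lf / 2 * ‖x‖ ^ 2 := by ring
  linarith [hlim, hid2, hid3.symm ▸ hid2]

/-- Generalized Frank-Wolfe with constant stepsize `α` and convex `g`:
`min_{0 ≤ i ≤ k} S(x⁽ⁱ⁾) ≤ Δ₀/(α(k+1)) + L_f Ω² α / 2`. -/
theorem generalized_FW_constant_stepsize_convex {m : ℕ}
    {D S : Set (EuclideanSpace ℝ (Fin m))}
    {f g : EuclideanSpace ℝ (Fin m) → ℝ}
    {f' : EuclideanSpace ℝ (Fin m) → EuclideanSpace ℝ (Fin m)}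
    {Lf Ω α Fstar : ℝ} (hLf : 0 ≤ Lf)
    (hDopen : IsOpen D) (hDconv : Convex ℝ D)
    (hdiff : ∀ x ∈ D, HasGradientAt f (f' x) x)
    (hconc : ConcaveOn ℝ D (fun x => f x - Lf / 2 * ‖x‖ ^ 2))
    (hScompact : IsCompact S) (hSconv : Convex ℝ S) (hSD : S ⊆ D)
    (hgconv : ConvexOn ℝ S g)
    (hΩ : Metric.diam S = Ω)
    (hFstar : IsLeast ((fun z => f z + g z) '' S) Fstar)
    (hα0 : 0 < α) (hα1 : α ≤ 1)
    {x p : ℕ → EuclideanSpace ℝ (Fin m)}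
    (hx0 : x 0 ∈ S)
    (hpS : ∀ k, p k ∈ S)
    (hpmin : ∀ k, ∀ q ∈ S,
      ⟪f' (x k), p k⟫ + g (p k) ≤ ⟪f' (x k), q⟫ + g q)
    (hupdate : ∀ k, x (k + 1) = x k + α • (p k - x k)) :
    ∀ k : ℕ, ∃ i ≤ k,
      ⟪f' (x i), x i - p i⟫ + g (x i) - g (p i) ≤
        (f (x 0) + g (x 0) - Fstar) / (α * (k + 1)) + Lf * Ω ^ 2 * α / 2 := by
  -- iterates stay in S
  have hxS : ∀ k, x k ∈ S := by
    intro k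
    induction k with
    | zero => exact hx0
    | succ n ih =>
      rw [hupdate n]
      have hcomb : x n + α • (p n - x n) = (1 - α) • x n + α • p n := by module
      rw [hcomb]
      exact hSconv ih (hpS n) (by linarith) hα0.le (by ring)
  have hΩ0 : 0 ≤ Ω := hΩ ▸ Metric.diam_nonneg
  set s : ℕ → ℝ := fun i => ⟪f' (x i), x i - p i⟫ + g (x i) - g (p i) with hs
  set c : ℝ := Lf * α ^ 2 * Ω ^ 2 / 2 with hc
  have hdist : ∀ k, ‖p k - x k‖ ≤ Ω := by
    intro k
    have := Metric.dist_le_diam_of_mem hScompact.isBounded (hpS k) (hxS k)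
    rwa [dist_eq_norm, hΩ] at this
  -- one-step descent
  have hstep : ∀ k, f (x (k + 1)) + g (x (k + 1)) ≤
      f (x k) + g (x k) - α * s k + c := by
    intro k
    have hfb := FW_semiconcave_upper_bound hDconv hdiff hconc
      (hSD (hxS k)) (hSD (hxS (k + 1)))
    have hdif : x (k + 1) - x k = α • (p k - x k) := by rw [hupdate k]; abel
    rw [hdif] at hfb
    have hin : (⟪f' (x k), α • (p k - x k)⟫ : ℝ) = -(α * ⟪f' (x k), x k - p k⟫) := by
      rw [real_inner_smul_right]
      have : p k - x k = -(x k - p k) := by abel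
      rw [this, inner_neg_right]; ring
    have hnrm : ‖α • (p k - x k)‖ ^ 2 ≤ α ^ 2 * Ω ^ 2 := by
      rw [norm_smul, mul_pow]
      have h1 : ‖p k - x k‖ ^ 2 ≤ Ω ^ 2 :=
        pow_le_pow_left₀ (norm_nonneg _) (hdist k) 2
      have h2 : ‖(α : ℝ)‖ ^ 2 = α ^ 2 := by
        rw [Real.norm_eq_abs, sq_abs]
      rw [h2]
      nlinarith [sq_nonneg α]
    have hgb : g (x (k + 1)) ≤ (1 - α) * g (x k) + α * g (p k) := by
      rw [hupdate k]
      have hcomb : x k + α • (p k - x k) = (1 - α) • x k + α • p k := by module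
      rw [hcomb]
      simpa [smul_eq_mul] using
        hgconv.2 (hxS k) (hpS k) (by linarith : (0:ℝ) ≤ 1 - α) hα0.le (by ring)
    have hLfb : Lf / 2 * ‖α • (p k - x k)‖ ^ 2 ≤ c := by
      rw [hc]
      nlinarith [hnrm, sq_nonneg (‖α • (p k - x k)‖)]
    rw [hin] at hfb
    simp only [hs]
    nlinarith [hfb, hgb, hLfb]
  -- telescoping sum
  have hsum : ∀ n : ℕ, f (x n) + g (x n) ≤
      f (x 0) + g (x 0) - α * ∑ i ∈ Finset.range n, s i + n * c := by
    intro n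
    induction n with
    | zero => simp
    | succ n ih =>
      rw [Finset.sum_range_succ]
      have := hstep n
      push_cast
      linarith
  intro k
  -- lower bound by Fstar
  have hFlow : Fstar ≤ f (x (k + 1)) + g (x (k + 1)) :=
    hFstar.2 ⟨x (k + 1), hxS (k + 1), rfl⟩
  have hkey : α * ∑ i ∈ Finset.range (k + 1), s i ≤
      (f (x 0) + g (x 0) - Fstar) + (k + 1) * c := by
    have := hsum (k + 1)
    push_cast at this ⊢
    linarith
  -- minimum element
  obtain ⟨j, hjmem, hjmin⟩ := Finset.exists_min_image (Finset.range (k + 1)) s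
    ⟨0, Finset.mem_range.mpr (Nat.succ_pos k)⟩
  have hjk : j ≤ k := Nat.lt_succ_iff.mp (Finset.mem_range.mp hjmem)
  refine ⟨j, hjk, ?_⟩
  have hcard : ((k : ℝ) + 1) * s j ≤ ∑ i ∈ Finset.range (k + 1), s i := by
    have := Finset.card_nsmul_le_sum (Finset.range (k + 1)) s (s j)
      (fun i hi => hjmin i hi)
    rw [Finset.card_range, nsmul_eq_mul] at this
    push_cast at this
    exact this
    
  have hk1 : (0 : ℝ) < (k : ℝ) + 1 := by positivity
  have hαk : (0 : ℝ) < α * ((k : ℝ) + 1) := by positivity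
  have hmul : s j * (α * ((k : ℝ) + 1)) ≤
      (f (x 0) + g (x 0) - Fstar) + ((k : ℝ) + 1) * c := by
    nlinarith [hcard, hkey, hα0]
  have hfinal : s j ≤ ((f (x 0) + g (x 0) - Fstar) + ((k : ℝ) + 1) * c) /
      (α * ((k : ℝ) + 1)) := (le_div_iff₀ hαk).mpr hmul
  calc s j ≤ ((f (x 0) + g (x 0) - Fstar) + ((k : ℝ) + 1) * c) /
      (α * ((k : ℝ) + 1)) := hfinal
    _ = (f (x 0) + g (x 0) - Fstar) / (α * ((k : ℝ) + 1)) + Lf * Ω ^ 2 * α / 2 := by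
        rw [hc]; field_simp
end

section
/- In generalized Frank-Wolfe with constant stepsize α satisfying 0 < α < 2σ_g/(L_f + σ_g) and σ_g-strongly-convex g, min_{0≤i≤k} S(x^(i)) ≤ Δ₀ / (α · min(1, 2 - α(L_f+σ_g)/σ_g) · (k+1)), yielding an O(1/k) rate of convergence. -/
open scoped RealInnerProductSpace

/-- Gradient inequality for semi-concave functions: if `f - Lf/2 ‖·‖²` is concave on a
convex set `D` and `f` has gradient `f' x` at each `x ∈ D`, then
`f y ≤ f x + ⟪f' x, y - x⟫ + Lf/2 ‖y - x‖²`. -/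
lemma grad_ineq_semiconcave {E : Type*} [NormedAddCommGroup E] [InnerProductSpace ℝ E]
    [CompleteSpace E] {D : Set E} {f : E → ℝ} {f' : E → E} {Lf : ℝ}
    (hDconv : Convex ℝ D)
    (hdiff : ∀ x ∈ D, HasGradientAt f (f' x) x)
    (hconc : ConcaveOn ℝ D (fun x => f x - Lf / 2 * ‖x‖ ^ 2))
    {x y : E} (hx : x ∈ D) (hy : y ∈ D) :
    f y ≤ f x + ⟪f' x, y - x⟫ + Lf / 2 * ‖y - x‖ ^ 2 := by
  set v := y - x with hv
  have hψ : ConvexOn ℝ D (fun z => Lf / 2 * ‖z‖ ^ 2 - f z) := by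
    have heq : (fun z : E => Lf / 2 * ‖z‖ ^ 2 - f z) = -fun z => f z - Lf / 2 * ‖z‖ ^ 2 := by
      funext z; simp only [Pi.neg_apply]; ring
    rw [heq]; exact hconc.neg
  set c : ℝ → E := fun t => x + t • v with hc
  have hc0 : c 0 = x := by simp [hc]
  have hc1 : c 1 = y := by simp [hc, hv]
  have hcmem : ∀ t ∈ Set.Icc (0:ℝ) 1, c t ∈ D := by
    intro t ht
    have hct : c t = (1 - t) • x + t • y := by
      simp only [hc, hv]; module
    rw [hct]
    exact hDconv hx hy (by linarith [ht.2]) ht.1 (by ring)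
  set h : ℝ → ℝ := fun t => Lf / 2 * ‖c t‖ ^ 2 - f (c t) with hhdef
  have hh : ConvexOn ℝ (Set.Icc (0:ℝ) 1) h := by
    refine ⟨convex_Icc 0 1, ?_⟩
    intro s hs t ht a b ha hb hab
    have hcomb : c (a * s + b * t) = a • c s + b • c t := by
      have : a • c s + b • c t = (a + b) • x + (a * s + b * t) • v := by
        simp only [hc]; module
      rw [this, hab, one_smul]
    have := hψ.2 (hcmem s hs) (hcmem t ht) ha hb hab
    simp only [hhdef, smul_eq_mul]
    rw [hcomb]
    simpa [smul_eq_mul] using this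
  have hcd : HasDerivAt c v 0 := by
    have h1 : HasDerivAt (fun t : ℝ => t • v) ((1:ℝ) • v) 0 :=
      (hasDerivAt_id 0).smul_const v
    simpa [hc] using h1.const_add x
  have hfd : HasDerivAt (fun t => f (c t)) ⟪f' x, v⟫ 0 := by
    have hF : HasFDerivAt f (InnerProductSpace.toDual ℝ E (f' x) : E →L[ℝ] ℝ) x :=
      (hdiff x hx).hasFDerivAt
    have := hF.comp_hasDerivAt_of_eq 0 hcd hc0.symm
    simpa [Function.comp_def, InnerProductSpace.toDual_apply_apply] using this
  have hnd : HasDerivAt (fun t => ‖c t‖ ^ 2) (2 * ⟪x, v⟫) 0 := by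
    have := hcd.norm_sq
    rw [hc0] at this
    simpa using this
  have hhd : HasDerivAt h (Lf / 2 * (2 * ⟪x, v⟫) - ⟪f' x, v⟫) 0 :=
    (hnd.const_mul (Lf / 2)).sub hfd
  have hslope := hh.le_slope_of_hasDerivAt (Set.left_mem_Icc.2 zero_le_one)
    (Set.right_mem_Icc.2 zero_le_one) zero_lt_one hhd
  have hsl : slope h 0 1 = h 1 - h 0 := by simp [slope]
  rw [hsl] at hslope
  have hval : h 1 - h 0 = Lf / 2 * ‖y‖ ^ 2 - f y - (Lf / 2 * ‖x‖ ^ 2 - f x) := by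
    simp [hhdef, hc0, hc1]
  rw [hval] at hslope
  have hnormy : ‖y‖ ^ 2 = ‖x‖ ^ 2 + 2 * ⟪x, v⟫ + ‖v‖ ^ 2 := by
    have : y = x + v := by simp [hv]
    rw [this, norm_add_sq_real]
  rw [hnormy] at hslope
  linarith

/-- Strong optimality at the minimizer of a strongly convex function plus a linear term. -/
lemma strong_min_aux {E : Type*} [NormedAddCommGroup E] [InnerProductSpace ℝ E]
    {S : Set E} {g : E → ℝ} {σg : ℝ} (hσg : 0 < σg)
    (hsc : UniformConvexOn S (fun r => σg / 2 * r ^ 2) g)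
    {c p : E} (hp : p ∈ S)
    (hmin : ∀ q ∈ S, ⟪c, p⟫ + g p ≤ ⟪c, q⟫ + g q)
    {q : E} (hq : q ∈ S) :
    ⟪c, p⟫ + g p + σg / 2 * ‖q - p‖ ^ 2 ≤ ⟪c, q⟫ + g q := by
  set d := σg / 2 * ‖q - p‖ ^ 2 with hd
  have hd0 : 0 ≤ d := by rw [hd]; positivity
  clear_value d
  have key : ∀ t : ℝ, 0 < t → t ≤ 1 → ⟪c, p⟫ + g p + d ≤ ⟪c, q⟫ + g q + t * d := by
    intro t ht0 ht1
    have hz : (1 - t) • p + t • q ∈ S := hsc.1 hp hq (by linarith) ht0.le (by ring)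
    have h1 := hmin _ hz
    have h2 := hsc.2 hp hq (show (0:ℝ) ≤ 1 - t by linarith) ht0.le (by ring)
    have h3 : ⟪c, (1 - t) • p + t • q⟫ = (1 - t) * ⟪c, p⟫ + t * ⟪c, q⟫ := by
      rw [inner_add_right, real_inner_smul_right, real_inner_smul_right]
    have h4 : ‖p - q‖ = ‖q - p‖ := norm_sub_rev p q
    rw [h3] at h1
    rw [h4] at h2
    simp only [smul_eq_mul] at h2
    rw [← hd] at h2
    have hmul : t * (⟪c, p⟫ + g p + (1 - t) * d) ≤ t * (⟪c, q⟫ + g q) := by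
      nlinarith [h1, h2]
    have := le_of_mul_le_mul_left hmul ht0
    linarith
  refine le_of_forall_pos_le_add fun ε hε => ?_
  rcases eq_or_lt_of_le hd0 with h | h
  · have := key 1 one_pos le_rfl
    linarith [h.symm]
  · have ht0 : 0 < min 1 (ε / d) := lt_min one_pos (div_pos hε h)
    have hkey := key _ ht0 (min_le_left _ _)
    have htd : min 1 (ε / d) * d ≤ ε := by
      calc min 1 (ε / d) * d ≤ (ε / d) * d :=
            mul_le_mul_of_nonneg_right (min_le_right _ _) hd0
        _ = ε := div_mul_cancel₀ ε h.ne'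
    linarith

/-- Generalized Frank-Wolfe with constant stepsize `0 < α < 2σ_g/(L_f+σ_g)` and
strongly convex `g`: an `O(1/k)` bound on the best conditional gradient norm. -/
theorem generalized_FW_constant_stepsize_strongly_convex {m : ℕ}
    {D S : Set (EuclideanSpace ℝ (Fin m))}
    {f g : EuclideanSpace ℝ (Fin m) → ℝ}
    {f' : EuclideanSpace ℝ (Fin m) → EuclideanSpace ℝ (Fin m)}
    {Lf σg α Fstar : ℝ} (hLf : 0 ≤ Lf) (hσg : 0 < σg)
    (hDopen : IsOpen D) (hDconv : Convex ℝ D)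
    (hdiff : ∀ x ∈ D, HasGradientAt f (f' x) x)
    (hconc : ConcaveOn ℝ D (fun x => f x - Lf / 2 * ‖x‖ ^ 2))
    (hScompact : IsCompact S) (hSconv : Convex ℝ S) (hSD : S ⊆ D)
    (hstrong : ConvexOn ℝ S (fun x => g x - σg / 2 * ‖x‖ ^ 2))
    (hFstar : IsLeast ((fun z => f z + g z) '' S) Fstar)
    (hα0 : 0 < α) (hα1 : α ≤ 1) (hα2 : α < 2 * σg / (Lf + σg))
    {x p : ℕ → EuclideanSpace ℝ (Fin m)}
    (hx0 : x 0 ∈ S)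
    (hpS : ∀ k, p k ∈ S)
    (hpmin : ∀ k, ∀ q ∈ S,
      ⟪f' (x k), p k⟫ + g (p k) ≤ ⟪f' (x k), q⟫ + g q)
    (hupdate : ∀ k, x (k + 1) = x k + α • (p k - x k)) :
    ∀ k : ℕ, ∃ i ≤ k,
      ⟪f' (x i), x i - p i⟫ + g (x i) - g (p i) ≤
        (f (x 0) + g (x 0) - Fstar) /
          (α * min 1 (2 - α * (Lf + σg) / σg) * (k + 1)) := by
  have hLσ : 0 < Lf + σg := by linarith
  set F : EuclideanSpace ℝ (Fin m) → ℝ := fun z => f z + g z with hF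
  set Sk : ℕ → ℝ := fun i => ⟪f' (x i), x i - p i⟫ + g (x i) - g (p i) with hSkdef
  clear_value F Sk
  have hsc : UniformConvexOn S (fun r => σg / 2 * r ^ 2) g :=
    strongConvexOn_iff_convex.2 hstrong
  have hxS : ∀ k, x k ∈ S := by
    intro k
    induction k with
    | zero => exact hx0
    | succ n ih =>
      rw [hupdate n]
      have hco : x n + α • (p n - x n) = (1 - α) • x n + α • p n := by module
      rw [hco]
      exact hSconv ih (hpS n) (by linarith) hα0.le (by ring)
  have hSlb : ∀ k, σg / 2 * ‖x k - p k‖ ^ 2 ≤ Sk k := by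
    intro k
    have h := strong_min_aux hσg hsc (hpS k) (hpmin k) (hxS k)
    have hinner : ⟪f' (x k), x k - p k⟫ = ⟪f' (x k), x k⟫ - ⟪f' (x k), p k⟫ :=
      inner_sub_right _ _ _
    simp only [hSkdef]
    rw [hinner]
    linarith
  have hSnn : ∀ k, 0 ≤ Sk k := fun k => le_trans (by positivity) (hSlb k)
  set μ : ℝ := min 1 (2 - α * (Lf + σg) / σg) with hμdef
  have hμ1 : μ ≤ 1 := by rw [hμdef]; exact min_le_left _ _
  have hμlb : μ ≤ 2 - α * (Lf + σg) / σg := by rw [hμdef]; exact min_le_right _ _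
  have hμ2 : μ * σg ≤ 2 * σg - α * (Lf + σg) := by
    calc μ * σg ≤ (2 - α * (Lf + σg) / σg) * σg := mul_le_mul_of_nonneg_right hμlb hσg.le
      _ = 2 * σg - α * (Lf + σg) := by field_simp
  have hμpos : 0 < μ := by
    rw [hμdef]
    apply lt_min one_pos
    have h1 : α * (Lf + σg) < (2 * σg / (Lf + σg)) * (Lf + σg) :=
      mul_lt_mul_of_pos_right hα2 hLσ
    rw [div_mul_cancel₀ _ hLσ.ne'] at h1
    have : α * (Lf + σg) / σg < 2 := by rw [div_lt_iff₀ hσg]; linarith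
    linarith
  clear_value μ
  have hβ : 0 < α * μ := mul_pos hα0 hμpos
  have hdescent : ∀ k, F (x (k + 1)) ≤ F (x k) - α * μ * Sk k := by
    intro k
    have hxD : x k ∈ D := hSD (hxS k)
    have hf_ineq : f (x (k + 1)) ≤
        f (x k) + ⟪f' (x k), x (k + 1) - x k⟫ + Lf / 2 * ‖x (k + 1) - x k‖ ^ 2 :=
      grad_ineq_semiconcave hDconv hdiff hconc hxD (hSD (hxS (k + 1)))
    have hdiffx : x (k + 1) - x k = α • (p k - x k) := by
      rw [hupdate k]; abel
    have hinner2 : ⟪f' (x k), x (k + 1) - x k⟫ = -(α * ⟪f' (x k), x k - p k⟫) := by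
      rw [hdiffx, real_inner_smul_right]
      have hpn : p k - x k = -(x k - p k) := by abel
      rw [hpn, inner_neg_right]
      ring
    have hnorm2 : ‖x (k + 1) - x k‖ ^ 2 = α ^ 2 * ‖x k - p k‖ ^ 2 := by
      rw [hdiffx, norm_smul, mul_pow, Real.norm_eq_abs, sq_abs, norm_sub_rev]
    have hg_ineq : g (x (k + 1)) ≤
        (1 - α) * g (x k) + α * g (p k) - (1 - α) * α * (σg / 2 * ‖x k - p k‖ ^ 2) := by
      have hxe : x (k + 1) = (1 - α) • x k + α • p k := by
        rw [hupdate k]; module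
      rw [hxe]
      have h := hsc.2 (hxS k) (hpS k) (show (0:ℝ) ≤ 1 - α by linarith) hα0.le (by ring)
      simpa [smul_eq_mul] using h
    set N := ‖x k - p k‖ ^ 2 with hN
    have hN0 : 0 ≤ N := by rw [hN]; positivity
    clear_value N
    have hNle : σg * N ≤ 2 * Sk k := by
      have h := hSlb k
      rw [← hN] at h
      linarith
    have hcomb : F (x (k + 1)) ≤ F (x k) - α * Sk k +
        (Lf * α ^ 2 / 2 - (1 - α) * α * σg / 2) * N := by
      simp only [hF, hSkdef]
      rw [hinner2, hnorm2] at hf_ineq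
      nlinarith [hf_ineq, hg_ineq]
    set cc : ℝ := Lf * α ^ 2 / 2 - (1 - α) * α * σg / 2 with hcc
    clear_value cc
    have hfin : α * μ * Sk k ≤ α * Sk k - cc * N := by
      rcases le_or_gt cc 0 with hcneg | hcpos
      · nlinarith [mul_nonneg (mul_nonneg hα0.le (hSnn k)) (sub_nonneg.2 hμ1),
          mul_nonneg (neg_nonneg.2 hcneg) hN0]
      · have h1 : cc * (σg * N) ≤ cc * (2 * Sk k) :=
          mul_le_mul_of_nonneg_left hNle hcpos.le
        have h2 : α * (μ * σg) ≤ α * (2 * σg - α * (Lf + σg)) :=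
          mul_le_mul_of_nonneg_left hμ2 hα0.le
        have h3 : α * (μ * σg) * Sk k ≤ α * (2 * σg - α * (Lf + σg)) * Sk k :=
          mul_le_mul_of_nonneg_right h2 (hSnn k)
        have hexp : α * (2 * σg - α * (Lf + σg)) * Sk k = σg * (α * Sk k) - 2 * cc * Sk k := by
          rw [hcc]; ring
        rw [hexp] at h3
        have h4 : σg * (α * μ * Sk k) ≤ σg * (α * Sk k - cc * N) := by linarith [h1, h3]
        exact le_of_mul_le_mul_left h4 hσg
    linarith [hcomb, hfin]
  have hFstar_le : ∀ z ∈ S, Fstar ≤ F z := fun z hz => hFstar.2 ⟨z, hz, rfl⟩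
  have hsum : ∀ k, F (x k) + α * μ * ∑ i ∈ Finset.range k, Sk i ≤ F (x 0) := by
    intro k
    induction k with
    | zero => simp
    | succ n ih =>
      rw [Finset.sum_range_succ, mul_add]
      have := hdescent n
      linarith
  intro k
  obtain ⟨i, hik, hmini⟩ := Finset.exists_min_image (Finset.range (k + 1)) Sk
    ⟨0, Finset.mem_range.2 (Nat.succ_pos k)⟩
  refine ⟨i, Nat.lt_succ_iff.1 (Finset.mem_range.1 hik), ?_⟩
  have hcard : ((k : ℝ) + 1) * Sk i ≤ ∑ j ∈ Finset.range (k + 1), Sk j := by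
    calc ((k : ℝ) + 1) * Sk i = ∑ _j ∈ Finset.range (k + 1), Sk i := by
          rw [Finset.sum_const, Finset.card_range, nsmul_eq_mul]; push_cast; ring
      _ ≤ ∑ j ∈ Finset.range (k + 1), Sk j := Finset.sum_le_sum fun j hj => hmini j hj
  have hΔ : α * μ * ∑ j ∈ Finset.range (k + 1), Sk j ≤ F (x 0) - Fstar := by
    have h1 := hsum (k + 1)
    have h2 := hFstar_le (x (k + 1)) (hxS (k + 1))
    linarith
  have hden : (0 : ℝ) < α * μ * ((k : ℝ) + 1) := by
    apply mul_pos hβ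
    positivity
  have e1 : Sk i = ⟪f' (x i), x i - p i⟫ + g (x i) - g (p i) := by simp only [hSkdef]
  have e2 : F (x 0) = f (x 0) + g (x 0) := by simp only [hF]
  rw [← e1, ← e2]
  rw [le_div_iff₀ hden]
  have hmul := mul_le_mul_of_nonneg_left hcard hβ.le
  have heq : Sk i * (α * μ * ((k : ℝ) + 1)) = α * μ * (((k : ℝ) + 1) * Sk i) := by ring
  rw [heq]
  linarith [hmul, hΔ]
end

section
/- In generalized Frank-Wolfe with concave f and constant unit stepsize α_k = 1, min_{0≤i≤k} S(x^(i)) ≤ Δ₀/(k+1), where Δ₀ = F(x^(0)) - F*. -/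
open scoped RealInnerProductSpace Topology

lemma concave_gradient_ineq {E : Type*} [NormedAddCommGroup E] [InnerProductSpace ℝ E]
    [CompleteSpace E] {D : Set E} {f : E → ℝ} {gx : E}
    (hconc : ConcaveOn ℝ D f) {x y : E} (hx : x ∈ D) (hy : y ∈ D)
    (hgrad : HasGradientAt f gx x) :
    f y ≤ f x + ⟪gx, y - x⟫ := by
  set φ : ℝ → ℝ := fun t => f (x + t • (y - x)) with hφ
  have hline : HasDerivAt (fun t : ℝ => x + t • (y - x)) (y - x) (0 : ℝ) := by
    simpa using ((hasDerivAt_id (0:ℝ)).smul_const (y - x)).const_add x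
  have hfd : HasFDerivAt f (InnerProductSpace.toDual ℝ E gx) x := hgrad
  have hcomp : HasDerivAt φ ⟪gx, y - x⟫ 0 := by
    have hfd' : HasFDerivAt f (InnerProductSpace.toDual ℝ E gx) (x + (0:ℝ) • (y - x)) := by simpa using hfd
    have := hfd'.comp_hasDerivAt (0 : ℝ) hline
    exact this
  have hslope : Filter.Tendsto (slope φ 0) (𝓝[>] (0:ℝ)) (𝓝 ⟪gx, y - x⟫) := by
    have := hasDerivAt_iff_tendsto_slope.1 hcomp
    exact this.mono_left (nhdsWithin_mono _ (fun t ht => ne_of_gt ht))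
  have hev : ∀ᶠ t in 𝓝[>] (0:ℝ), f y - f x ≤ slope φ 0 t := by
    filter_upwards [Ioc_mem_nhdsGT (by norm_num : (0:ℝ) < 1)] with t ht
    have ht0 : 0 < t := ht.1
    have hcc := hconc.2 hx hy (by linarith [ht.2] : (0:ℝ) ≤ 1 - t) ht0.le (by ring)
    have hx' : x + t • (y - x) = (1 - t) • x + t • y := by
      rw [smul_sub]; module
    have key : (1 - t) * f x + t * f y ≤ φ t := by
      simpa [φ, hx', smul_eq_mul] using hcc
    have hφ0 : φ 0 = f x := by simp [φ]
    rw [slope_def_field, sub_zero, le_div_iff₀ ht0, hφ0]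
    nlinarith
  have := ge_of_tendsto hslope hev
  linarith

/-- Generalized Frank-Wolfe (= CCCP) with concave `f` and unit stepsize:
`min_{0 ≤ i ≤ k} S(x⁽ⁱ⁾) ≤ Δ₀/(k+1)`. -/
theorem generalized_FW_concave_unit_stepsize {m : ℕ}
    {D S : Set (EuclideanSpace ℝ (Fin m))}
    {f g : EuclideanSpace ℝ (Fin m) → ℝ}
    {f' : EuclideanSpace ℝ (Fin m) → EuclideanSpace ℝ (Fin m)}
    {Fstar : ℝ}
    (hDopen : IsOpen D) (hDconv : Convex ℝ D)
    (hdiff : ∀ x ∈ D, HasGradientAt f (f' x) x)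
    (hconc : ConcaveOn ℝ D f)
    (hScompact : IsCompact S) (hSconv : Convex ℝ S) (hSD : S ⊆ D)
    (hgconv : ConvexOn ℝ S g)
    (hFstar : IsLeast ((fun z => f z + g z) '' S) Fstar)
    {x p : ℕ → EuclideanSpace ℝ (Fin m)}
    (hx0 : x 0 ∈ S)
    (hpS : ∀ k, p k ∈ S)
    (hpmin : ∀ k, ∀ q ∈ S,
      ⟪f' (x k), p k⟫ + g (p k) ≤ ⟪f' (x k), q⟫ + g q)
    (hupdate : ∀ k, x (k + 1) = p k) :
    ∀ k : ℕ, ∃ i ≤ k,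
      ⟪f' (x i), x i - p i⟫ + g (x i) - g (p i) ≤
        (f (x 0) + g (x 0) - Fstar) / (k + 1) := by
  set F : EuclideanSpace ℝ (Fin m) → ℝ := fun z => f z + g z with hF
  set Sv : ℕ → ℝ := fun i => ⟪f' (x i), x i - p i⟫ + g (x i) - g (p i) with hSv
  have hxS : ∀ i, x i ∈ S := by
    intro i
    induction i with
    | zero => exact hx0
    | succ n _ => rw [hupdate n]; exact hpS n
  have key : ∀ i, Sv i ≤ F (x i) - F (x (i + 1)) := by
    intro i
    have hgrad := hdiff (x i) (hSD (hxS i))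
    have hineq := concave_gradient_ineq hconc (hSD (hxS i)) (hSD (hpS i)) hgrad
    have hinner : ⟪f' (x i), x i - p i⟫ = -⟪f' (x i), p i - x i⟫ := by
      rw [← inner_neg_right]; congr 1; abel
    simp only [hSv, hF, hupdate i, hinner]
    linarith
  intro k
  by_contra hcon
  push_neg at hcon
  have hsum_le : ∑ i ∈ Finset.range (k + 1), Sv i ≤ F (x 0) - Fstar := by
    have htel : ∑ i ∈ Finset.range (k + 1), (F (x i) - F (x (i + 1)))
        = F (x 0) - F (x (k + 1)) := Finset.sum_range_sub' (fun i => F (x i)) (k + 1)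
    have h1 : ∑ i ∈ Finset.range (k + 1), Sv i
        ≤ ∑ i ∈ Finset.range (k + 1), (F (x i) - F (x (i + 1))) :=
      Finset.sum_le_sum fun i _ => key i
    have h2 : Fstar ≤ F (x (k + 1)) := hFstar.2 ⟨x (k + 1), hxS (k + 1), rfl⟩
    rw [htel] at h1
    linarith
  have hpos : (0 : ℝ) < (k : ℝ) + 1 := by positivity
  have hgt : F (x 0) - Fstar < ∑ i ∈ Finset.range (k + 1), Sv i := by
    calc F (x 0) - Fstar
        = ∑ _i ∈ Finset.range (k + 1), (F (x 0) - Fstar) / ((k : ℝ) + 1) := by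
          rw [Finset.sum_const, Finset.card_range, nsmul_eq_mul]
          field_simp
          push_cast
          ring
      _ < ∑ i ∈ Finset.range (k + 1), Sv i := by
          apply Finset.sum_lt_sum_of_nonempty (Finset.nonempty_range_iff.2 (Nat.succ_ne_zero k))
          intro i hi
          have := hcon i (Nat.lt_succ_iff.1 (Finset.mem_range.1 hi))
          simpa [hSv, hF] using this
  linarith
end

section
/- For x ∈ X (the product of n probability simplices in ℝ^{nd}) and its nearest-rounded discrete vector y ∈ X ∩ {0,1}^{nd}, the quadratic energy E(x) = (1/2)xᵀPx + uᵀx satisfies |E(x) - E(y)| ≤ √(n(1 - 1/d))(||u||₂ + √n ||P||₂). -/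
open scoped RealInnerProductSpace

/-- Nearest rounding changes the quadratic energy `E(x) = ½xᵀPx + uᵀx` by at
most `√(n(1-1/d)) (‖u‖₂ + √n ‖P‖₂)`. -/
theorem energy_nearest_rounding_bound {n d : ℕ} (hn : 0 < n) (hd : 0 < d)
    (P : EuclideanSpace ℝ (Fin n × Fin d) →L[ℝ] EuclideanSpace ℝ (Fin n × Fin d))
    (hPsymm : ∀ a b, ⟪P a, b⟫ = ⟪a, P b⟫)
    (u x y : EuclideanSpace ℝ (Fin n × Fin d))
    (hx0 : ∀ i s, 0 ≤ x (i, s)) (hx1 : ∀ i, ∑ s, x (i, s) = 1)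
    (σ : Fin n → Fin d) (hσ : ∀ i s, x (i, s) ≤ x (i, σ i))
    (hy : ∀ i s, y (i, s) = if s = σ i then 1 else 0) :
    |((1 : ℝ) / 2 * ⟪x, P x⟫ + ⟪u, x⟫)
        - ((1 : ℝ) / 2 * ⟪y, P y⟫ + ⟪u, y⟫)| ≤
      Real.sqrt (n * (1 - 1 / (d : ℝ))) * (‖u‖ + Real.sqrt n * ‖P‖) := by
  have normsq : ∀ v : EuclideanSpace ℝ (Fin n × Fin d), ‖v‖ ^ 2 = ∑ p, (v p) ^ 2 := by
    intro v
    rw [EuclideanSpace.norm_eq, Real.sq_sqrt (Finset.sum_nonneg fun _ _ => sq_nonneg _)]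
    simp [PiLp.inner_apply, RCLike.inner_apply, sq]
  -- ‖x‖ ≤ √n
  have hxn : ‖x‖ ≤ Real.sqrt n := by
    rw [Real.le_sqrt (norm_nonneg _) (Nat.cast_nonneg _), normsq,
      Fintype.sum_prod_type]
    calc ∑ i, ∑ s, x (i, s) ^ 2
        ≤ ∑ i : Fin n, (1 : ℝ) := by
          refine Finset.sum_le_sum fun i _ => ?_
          calc ∑ s, x (i, s) ^ 2 ≤ (∑ s, x (i, s)) ^ 2 :=
                Finset.sum_sq_le_sq_sum_of_nonneg fun s _ => hx0 i s
            _ = 1 := by rw [hx1 i]; norm_num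
      _ = n := by simp
  have hyn : ‖y‖ ≤ Real.sqrt n := by
    rw [Real.le_sqrt (norm_nonneg _) (Nat.cast_nonneg _), normsq,
      Fintype.sum_prod_type]
    calc ∑ i, ∑ s, y (i, s) ^ 2
        ≤ ∑ i : Fin n, (1 : ℝ) := by
          refine Finset.sum_le_sum fun i _ => le_of_eq ?_
          rw [Finset.sum_eq_single (σ i)]
          · simp [hy]
          · intro s _ hs; simp [hy, hs]
          · simp
      _ = n := by simp
  -- ‖x - y‖ ≤ √(n(1-1/d))
  have hzn : ‖x - y‖ ≤ Real.sqrt (n * (1 - 1 / (d : ℝ))) := by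
    have hnn : (0 : ℝ) ≤ n * (1 - 1 / (d : ℝ)) := by
      apply mul_nonneg (Nat.cast_nonneg _)
      have : (1 : ℝ) / d ≤ 1 := by
        rw [div_le_one (by exact_mod_cast hd)]
        exact_mod_cast hd
      linarith
    rw [Real.le_sqrt (norm_nonneg _) hnn, normsq, Fintype.sum_prod_type]
    have key : ∀ i, ∑ s, ((x - y) (i, s)) ^ 2 ≤ 1 - 1 / (d : ℝ) := by
      intro i
      set m : ℝ := x (i, σ i) with hm
      have hmd : 1 / (d : ℝ) ≤ m := by
        rw [div_le_iff₀ (by exact_mod_cast hd)]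
        calc (1 : ℝ) = ∑ s, x (i, s) := (hx1 i).symm
          _ ≤ ∑ _s : Fin d, m := Finset.sum_le_sum fun s _ => hσ i s
          _ = m * d := by simp [mul_comm]
      have hm1 : m ≤ 1 := by
        rw [← hx1 i]
        exact Finset.single_le_sum (fun s _ => hx0 i s) (Finset.mem_univ _)
      have hsplit : ∑ s, ((x - y) (i, s)) ^ 2
          = (m - 1) ^ 2 + ∑ s ∈ Finset.univ.erase (σ i), x (i, s) ^ 2 := by
        rw [← Finset.add_sum_erase _ _ (Finset.mem_univ (σ i))]
        congr 1
        · simp [hy, hm]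
        · refine Finset.sum_congr rfl fun s hs => ?_
          have : s ≠ σ i := Finset.ne_of_mem_erase hs
          simp [hy, this]
      rw [hsplit]
      have hrest : ∑ s ∈ Finset.univ.erase (σ i), x (i, s) ^ 2 ≤ m * (1 - m) := by
        have h1 : ∑ s ∈ Finset.univ.erase (σ i), x (i, s) = 1 - m := by
          have := Finset.add_sum_erase Finset.univ (fun s => x (i, s))
            (Finset.mem_univ (σ i))
          rw [hx1 i] at this
          linarith
        calc ∑ s ∈ Finset.univ.erase (σ i), x (i, s) ^ 2
            ≤ ∑ s ∈ Finset.univ.erase (σ i), m * x (i, s) := by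
              refine Finset.sum_le_sum fun s _ => ?_
              rw [sq]
              exact mul_le_mul_of_nonneg_right (hσ i s) (hx0 i s)
          _ = m * (1 - m) := by rw [← Finset.mul_sum, h1]
      have : (m - 1) ^ 2 + m * (1 - m) = 1 - m := by ring
      linarith
    calc ∑ i, ∑ s, ((x - y) (i, s)) ^ 2
        ≤ ∑ _i : Fin n, (1 - 1 / (d : ℝ)) := Finset.sum_le_sum fun i _ => key i
      _ = n * (1 - 1 / (d : ℝ)) := by simp [mul_comm]; ring
  -- algebraic identity
  have hid : ((1 : ℝ) / 2 * ⟪x, P x⟫ + ⟪u, x⟫) - ((1 : ℝ) / 2 * ⟪y, P y⟫ + ⟪u, y⟫)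
      = 1 / 2 * ⟪x - y, P (x + y)⟫ + ⟪u, x - y⟫ := by
    have h1 : ⟪x, P y⟫ = ⟪y, P x⟫ := by
      rw [← hPsymm x y, real_inner_comm]
    rw [map_add, inner_sub_left, inner_add_right, inner_add_right, inner_sub_right]
    rw [h1]
    ring
  rw [hid]
  have hPb : ‖P (x + y)‖ ≤ ‖P‖ * (2 * Real.sqrt n) := by
    calc ‖P (x + y)‖ ≤ ‖P‖ * ‖x + y‖ := P.le_opNorm _
      _ ≤ ‖P‖ * (2 * Real.sqrt n) := by
          refine mul_le_mul_of_nonneg_left ?_ (norm_nonneg _)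
          calc ‖x + y‖ ≤ ‖x‖ + ‖y‖ := norm_add_le _ _
            _ ≤ 2 * Real.sqrt n := by linarith
  calc |1 / 2 * ⟪x - y, P (x + y)⟫ + ⟪u, x - y⟫|
      ≤ |1 / 2 * ⟪x - y, P (x + y)⟫| + |⟪u, x - y⟫| := abs_add_le _ _
    _ ≤ 1 / 2 * (‖x - y‖ * ‖P (x + y)‖) + ‖u‖ * ‖x - y‖ := by
        gcongr
        · rw [abs_mul, abs_of_nonneg (by norm_num : (0:ℝ) ≤ 1/2)]
          exact mul_le_mul_of_nonneg_left (abs_real_inner_le_norm _ _) (by norm_num)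
        · exact abs_real_inner_le_norm _ _
    _ ≤ 1 / 2 * (‖x - y‖ * (‖P‖ * (2 * Real.sqrt n))) + ‖u‖ * ‖x - y‖ := by
        gcongr
    _ = ‖x - y‖ * (‖u‖ + Real.sqrt n * ‖P‖) := by ring
    _ ≤ Real.sqrt (n * (1 - 1 / (d : ℝ))) * (‖u‖ + Real.sqrt n * ‖P‖) := by
        refine mul_le_mul_of_nonneg_right hzn ?_
        have := Real.sqrt_nonneg (n : ℝ)
        positivity
end

section
/- Let x*_r minimize E_r(x) = E(x) + r(x) over X with m ≤ r ≤ M on X, and let y be the nearest rounding of x*_r. Then E* ≤ E(y) ≤ E* + M - m + C, where C = √(n(1-1/d))(||u||₂ + √n||P||₂) and E* is the minimum discrete energy. -/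
open scoped RealInnerProductSpace

lemma simplex_norm_le_aux {n d : ℕ} (x : EuclideanSpace ℝ (Fin n × Fin d))
    (h0 : ∀ i s, 0 ≤ x (i, s)) (h1 : ∀ i, ∑ s, x (i, s) = 1) :
    ‖x‖ ≤ Real.sqrt n := by
  rw [EuclideanSpace.norm_eq]
  apply Real.sqrt_le_sqrt
  rw [Fintype.sum_prod_type]
  calc ∑ i : Fin n, ∑ s : Fin d, ‖x (i, s)‖ ^ 2
      ≤ ∑ _i : Fin n, (1 : ℝ) := by
        apply Finset.sum_le_sum
        intro i _
        calc ∑ s : Fin d, ‖x (i, s)‖ ^ 2 ≤ ∑ s : Fin d, x (i, s) := by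
              apply Finset.sum_le_sum
              intro s _
              rw [Real.norm_eq_abs, sq_abs]
              have hle : x (i, s) ≤ 1 := by
                rw [← h1 i]
                exact Finset.single_le_sum (fun t _ => h0 i t) (Finset.mem_univ s)
              nlinarith [h0 i s]
          _ = 1 := h1 i
    _ = (n : ℝ) := by simp

/-- Additive bound on the discrete energy of the nearest rounding of the
minimizer of the regularized relaxation. -/
theorem regularized_relaxation_nearest_rounding_bound {n d : ℕ}
    (hn : 0 < n) (hd : 0 < d)
    {P : EuclideanSpace ℝ (Fin n × Fin d) →L[ℝ] EuclideanSpace ℝ (Fin n × Fin d)}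
    (hPsymm : ∀ a b, ⟪P a, b⟫ = ⟪a, P b⟫)
    (u : EuclideanSpace ℝ (Fin n × Fin d))
    {r : EuclideanSpace ℝ (Fin n × Fin d) → ℝ} {mr Mr Estar : ℝ}
    {xr y : EuclideanSpace ℝ (Fin n × Fin d)}
    (hxrX : (∀ i s, 0 ≤ xr (i, s)) ∧ ∀ i, ∑ s, xr (i, s) = 1)
    (hrbound : ∀ z : EuclideanSpace ℝ (Fin n × Fin d),
      ((∀ i s, 0 ≤ z (i, s)) ∧ ∀ i, ∑ s, z (i, s) = 1) →
        mr ≤ r z ∧ r z ≤ Mr)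
    (hxrmin : ∀ z : EuclideanSpace ℝ (Fin n × Fin d),
      ((∀ i s, 0 ≤ z (i, s)) ∧ ∀ i, ∑ s, z (i, s) = 1) →
        ((1 : ℝ) / 2 * ⟪xr, P xr⟫ + ⟪u, xr⟫) + r xr ≤
          ((1 : ℝ) / 2 * ⟪z, P z⟫ + ⟪u, z⟫) + r z)
    (σ : Fin n → Fin d) (hσ : ∀ i s, xr (i, s) ≤ xr (i, σ i))
    (hy : ∀ i s, y (i, s) = if s = σ i then 1 else 0)
    (hEstar : IsLeast {v : ℝ | ∃ z : EuclideanSpace ℝ (Fin n × Fin d),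
      ((∀ i s, z (i, s) = 0 ∨ z (i, s) = 1) ∧ ∀ i, ∑ s, z (i, s) = 1) ∧
        v = (1 : ℝ) / 2 * ⟪z, P z⟫ + ⟪u, z⟫} Estar) :
    Estar ≤ (1 : ℝ) / 2 * ⟪y, P y⟫ + ⟪u, y⟫ ∧
    (1 : ℝ) / 2 * ⟪y, P y⟫ + ⟪u, y⟫ ≤
      Estar + Mr - mr +
        Real.sqrt (n * (1 - 1 / (d : ℝ))) * (‖u‖ + Real.sqrt n * ‖P‖) := by
  have hdR : (0:ℝ) < d := by exact_mod_cast hd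
  have hy01 : ∀ i s, y (i, s) = 0 ∨ y (i, s) = 1 := by
    intro i s; rw [hy]; split <;> simp
  have hysum : ∀ i, ∑ s, y (i, s) = 1 := by
    intro i; simp [hy]
  have hy0 : ∀ i s, 0 ≤ y (i, s) := by
    intro i s; rcases hy01 i s with h | h <;> simp [h]
  have hEyStar : Estar ≤ (1:ℝ)/2 * ⟪y, P y⟫ + ⟪u, y⟫ :=
    hEstar.2 ⟨y, ⟨hy01, hysum⟩, rfl⟩
  refine ⟨hEyStar, ?_⟩
  obtain ⟨z, ⟨hz01, hzsum⟩, hzE⟩ := hEstar.1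
  have hz0 : ∀ i s, 0 ≤ z (i, s) := by
    intro i s; rcases hz01 i s with h | h <;> simp [h]
  have hrx := hrbound xr hxrX
  have hrz := hrbound z ⟨hz0, hzsum⟩
  have hExr : (1:ℝ)/2 * ⟪xr, P xr⟫ + ⟪u, xr⟫ ≤ Estar + Mr - mr := by
    have h := hxrmin z ⟨hz0, hzsum⟩
    rw [← hzE] at h
    linarith [hrx.1, hrz.2]
  -- norms
  have hxnorm : ‖xr‖ ≤ Real.sqrt n := simplex_norm_le_aux xr hxrX.1 hxrX.2
  have hynorm : ‖y‖ ≤ Real.sqrt n := simplex_norm_le_aux y hy0 hysum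
  have hdiff : ‖y - xr‖ ≤ Real.sqrt (n * (1 - 1/(d:ℝ))) := by
    rw [EuclideanSpace.norm_eq]
    apply Real.sqrt_le_sqrt
    rw [Fintype.sum_prod_type]
    have hblock : ∀ i, ∑ s, ‖(y - xr) (i, s)‖ ^ 2 ≤ 1 - 1/(d:ℝ) := by
      intro i
      set c := xr (i, σ i) with hc
      have hc1 : 1/(d:ℝ) ≤ c := by
        rw [div_le_iff₀ hdR, mul_comm]
        calc (1:ℝ) = ∑ s, xr (i, s) := (hxrX.2 i).symm
          _ ≤ ∑ _s : Fin d, c := Finset.sum_le_sum fun s _ => hσ i s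
          _ = d * c := by simp [mul_comm]
      have hcle : c ≤ 1 := by
        rw [← hxrX.2 i]
        exact Finset.single_le_sum (fun t _ => hxrX.1 i t) (Finset.mem_univ (σ i))
      have hsub : ∀ s, (y - xr) (i, s) = y (i, s) - xr (i, s) := fun s => rfl
      have hsumerase : ∑ s ∈ Finset.univ.erase (σ i), xr (i, s) = 1 - c := by
        have := Finset.add_sum_erase Finset.univ (fun s => xr (i, s))
          (Finset.mem_univ (σ i))
        rw [hxrX.2 i] at this
        linarith
      calc ∑ s, ‖(y - xr) (i, s)‖ ^ 2
          = (1 - c)^2 + ∑ s ∈ Finset.univ.erase (σ i), (xr (i, s))^2 := by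
            rw [← Finset.add_sum_erase Finset.univ _ (Finset.mem_univ (σ i))]
            congr 1
            · rw [hsub, hy]
              simp [Real.norm_eq_abs, sq_abs, hc]
            · apply Finset.sum_congr rfl
              intro s hs
              have hne : s ≠ σ i := (Finset.mem_erase.mp hs).1
              rw [hsub, hy]
              simp [hne, Real.norm_eq_abs, sq_abs]
        _ ≤ (1 - c)^2 + c * (1 - c) := by
            have h2 : ∑ s ∈ Finset.univ.erase (σ i), (xr (i, s))^2
                ≤ ∑ s ∈ Finset.univ.erase (σ i), c * xr (i, s) := by
              apply Finset.sum_le_sum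
              intro s _
              have := hσ i s
              have := hxrX.1 i s
              nlinarith
            rw [← Finset.mul_sum, hsumerase] at h2
            linarith
        _ = 1 - c := by ring
        _ ≤ 1 - 1/(d:ℝ) := by linarith
    calc ∑ i : Fin n, ∑ s, ‖(y - xr) (i, s)‖ ^ 2
        ≤ ∑ _i : Fin n, (1 - 1/(d:ℝ)) := Finset.sum_le_sum fun i _ => hblock i
      _ = n * (1 - 1/(d:ℝ)) := by simp [mul_comm]; ring
  -- quadratic difference
  have hsymm : ⟪y, P y⟫ - ⟪xr, P xr⟫ = ⟪y - xr, P (y + xr)⟫ := by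
    have h1 : ⟪y, P xr⟫ = ⟪xr, P y⟫ := by
      rw [real_inner_comm, hPsymm]
    simp only [map_add, inner_sub_left, inner_add_right]
    linarith
  have hA0 : (0:ℝ) ≤ ‖y - xr‖ := norm_nonneg _
  have hP0 : (0:ℝ) ≤ ‖P‖ := norm_nonneg _
  have hn0 : (0:ℝ) ≤ Real.sqrt n := Real.sqrt_nonneg _
  have hiu : ⟪u, y - xr⟫ ≤ ‖u‖ * ‖y - xr‖ := real_inner_le_norm _ _
  have hiP : ⟪y - xr, P (y + xr)⟫ ≤ ‖y - xr‖ * (‖P‖ * (2 * Real.sqrt n)) := by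
    calc ⟪y - xr, P (y + xr)⟫ ≤ ‖y - xr‖ * ‖P (y + xr)‖ := real_inner_le_norm _ _
      _ ≤ ‖y - xr‖ * (‖P‖ * ‖y + xr‖) := by
          apply mul_le_mul_of_nonneg_left (P.le_opNorm _) hA0
      _ ≤ ‖y - xr‖ * (‖P‖ * (2 * Real.sqrt n)) := by
          apply mul_le_mul_of_nonneg_left _ hA0
          apply mul_le_mul_of_nonneg_left _ hP0
          calc ‖y + xr‖ ≤ ‖y‖ + ‖xr‖ := norm_add_le _ _
            _ ≤ 2 * Real.sqrt n := by linarith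
  have hinu : ⟪u, y⟫ - ⟪u, xr⟫ = ⟪u, y - xr⟫ := (inner_sub_right _ _ _).symm
  have key : (1:ℝ)/2 * ⟪y, P y⟫ + ⟪u, y⟫ - ((1:ℝ)/2 * ⟪xr, P xr⟫ + ⟪u, xr⟫)
      ≤ ‖y - xr‖ * (‖u‖ + Real.sqrt n * ‖P‖) := by
    nlinarith [hiu, hiP, hsymm, hinu]
  have hC0 : (0:ℝ) ≤ ‖u‖ + Real.sqrt n * ‖P‖ := by positivity
  have hfin : ‖y - xr‖ * (‖u‖ + Real.sqrt n * ‖P‖)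
      ≤ Real.sqrt (n * (1 - 1/(d:ℝ))) * (‖u‖ + Real.sqrt n * ‖P‖) :=
    mul_le_mul_of_nonneg_right hdiff hC0
  linarith
end

section
/- If r ≡ 0, then any global minimizer of E over the product of simplices X, after a non-energy-increasing rounding, gives a binary point achieving the minimum discrete energy E*; i.e., the continuous relaxation min_{x∈X} E(x) is tight: its optimal value equals min over X ∩ {0,1}^{nd} of E. -/
open scoped RealInnerProductSpace

theorem eq_of_isLeast_image_of_isMinOn {α β : Type*} [PartialOrder β] {f : α → β}
    {S T : Set α} (hTS : T ⊆ S) {x y : α} {m : β} (hx : IsMinOn f S x) (hy : y ∈ T)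
    (hyx : f y ≤ f x) (hm : IsLeast (f '' T) m) : f y = m ∧ f x = m := by
  obtain ⟨⟨z, hzT, rfl⟩, hlower⟩ := hm
  have hxz : f x ≤ f z := hx (hTS hzT)
  have hzy : f z ≤ f y := hlower ⟨y, hy, rfl⟩
  exact ⟨le_antisymm (hyx.trans hxz) hzy, le_antisymm hxz (hzy.trans hyx)⟩

def blockSimplex (ι κ : Type*) [Fintype κ] : Set (EuclideanSpace ℝ (ι × κ)) :=
  {z | (∀ i s, 0 ≤ z (i, s)) ∧ ∀ i, ∑ s, z (i, s) = 1}

def blockSimplexVertices (ι κ : Type*) [Fintype κ] : Set (EuclideanSpace ℝ (ι × κ)) :=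
  {z | (∀ i s, z (i, s) = 0 ∨ z (i, s) = 1) ∧ ∀ i, ∑ s, z (i, s) = 1}

theorem blockSimplexVertices_subset_blockSimplex {ι κ : Type*} [Fintype κ] :
    blockSimplexVertices ι κ ⊆ blockSimplex ι κ := fun _ ⟨hbin, hsum⟩ =>
  ⟨fun i s => (hbin i s).elim (fun h => h.ge) (fun h => h ▸ zero_le_one), hsum⟩

theorem unregularized_relaxation_tight_general {n d : ℕ}
    {P : EuclideanSpace ℝ (Fin n × Fin d) →L[ℝ] EuclideanSpace ℝ (Fin n × Fin d)}
    (u : EuclideanSpace ℝ (Fin n × Fin d))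
    {xstar y : EuclideanSpace ℝ (Fin n × Fin d)} {Estar : ℝ}
    (hxmin : ∀ z : EuclideanSpace ℝ (Fin n × Fin d),
      ((∀ i s, 0 ≤ z (i, s)) ∧ ∀ i, ∑ s, z (i, s) = 1) →
        (1 : ℝ) / 2 * ⟪xstar, P xstar⟫ + ⟪u, xstar⟫ ≤
          (1 : ℝ) / 2 * ⟪z, P z⟫ + ⟪u, z⟫)
    (hybin : (∀ i s, y (i, s) = 0 ∨ y (i, s) = 1) ∧ ∀ i, ∑ s, y (i, s) = 1)
    (hyE : (1 : ℝ) / 2 * ⟪y, P y⟫ + ⟪u, y⟫ ≤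
      (1 : ℝ) / 2 * ⟪xstar, P xstar⟫ + ⟪u, xstar⟫)
    (hEstar : IsLeast {v : ℝ | ∃ z : EuclideanSpace ℝ (Fin n × Fin d),
      ((∀ i s, z (i, s) = 0 ∨ z (i, s) = 1) ∧ ∀ i, ∑ s, z (i, s) = 1) ∧
        v = (1 : ℝ) / 2 * ⟪z, P z⟫ + ⟪u, z⟫} Estar) :
    (1 : ℝ) / 2 * ⟪y, P y⟫ + ⟪u, y⟫ = Estar ∧
    (1 : ℝ) / 2 * ⟪xstar, P xstar⟫ + ⟪u, xstar⟫ = Estar := by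
  set E : EuclideanSpace ℝ (Fin n × Fin d) → ℝ := fun z => (1 : ℝ) / 2 * ⟪z, P z⟫ + ⟪u, z⟫
  have hdiscrete : E '' blockSimplexVertices (Fin n) (Fin d) = {v : ℝ | ∃ z, ((∀ i s,
      z (i, s) = 0 ∨ z (i, s) = 1) ∧ ∀ i, ∑ s, z (i, s) = 1) ∧ v = E z} := by
    ext v
    simp only [Set.mem_image, Set.mem_ofPred_eq, eq_comm (a := v)]
    rfl
  exact eq_of_isLeast_image_of_isMinOn (f := E) blockSimplexVertices_subset_blockSimplex
    hxmin hybin hyE (hdiscrete ▸ hEstar)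

/-- Tightness of the unregularized relaxation: a global minimizer of `E` over
the product of simplices, followed by a non-energy-increasing rounding, attains
the minimum discrete energy, and the continuous and discrete optima agree. -/
theorem unregularized_relaxation_tight {n d : ℕ}
    {P : EuclideanSpace ℝ (Fin n × Fin d) →L[ℝ] EuclideanSpace ℝ (Fin n × Fin d)}
    (hPsymm : ∀ a b, ⟪P a, b⟫ = ⟪a, P b⟫)
    (u : EuclideanSpace ℝ (Fin n × Fin d))
    {xstar y : EuclideanSpace ℝ (Fin n × Fin d)} {Estar : ℝ}
    (hxX : (∀ i s, 0 ≤ xstar (i, s)) ∧ ∀ i, ∑ s, xstar (i, s) = 1)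
    (hxmin : ∀ z : EuclideanSpace ℝ (Fin n × Fin d),
      ((∀ i s, 0 ≤ z (i, s)) ∧ ∀ i, ∑ s, z (i, s) = 1) →
        (1 : ℝ) / 2 * ⟪xstar, P xstar⟫ + ⟪u, xstar⟫ ≤
          (1 : ℝ) / 2 * ⟪z, P z⟫ + ⟪u, z⟫)
    (hybin : (∀ i s, y (i, s) = 0 ∨ y (i, s) = 1) ∧ ∀ i, ∑ s, y (i, s) = 1)
    (hyE : (1 : ℝ) / 2 * ⟪y, P y⟫ + ⟪u, y⟫ ≤
      (1 : ℝ) / 2 * ⟪xstar, P xstar⟫ + ⟪u, xstar⟫)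
    (hEstar : IsLeast {v : ℝ | ∃ z : EuclideanSpace ℝ (Fin n × Fin d),
      ((∀ i s, z (i, s) = 0 ∨ z (i, s) = 1) ∧ ∀ i, ∑ s, z (i, s) = 1) ∧
        v = (1 : ℝ) / 2 * ⟪z, P z⟫ + ⟪u, z⟫} Estar) :
    (1 : ℝ) / 2 * ⟪y, P y⟫ + ⟪u, y⟫ = Estar ∧
    (1 : ℝ) / 2 * ⟪xstar, P xstar⟫ + ⟪u, xstar⟫ = Estar :=
  unregularized_relaxation_tight_general u hxmin hybin hyE hEstar
end

section
/- For c ∈ ℝ^d, sort c decreasingly into a with a₁ ≥ ... ≥ a_d, set γ_k = (a₁ + ... + a_k - 1)/k, and let k* be the largest k with a_k > γ_k. Then the Euclidean projection of c onto the probability simplex is z* = max(c - γ_{k*}, 0) componentwise. -/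
/-!
Write `f = max (c - θ, 0)` for a threshold `θ`. For every `z ≥ 0`, coordinatewise
`(f - c)² ≤ (z - c)² + 2θ (z - f)`, so `f` is the closest point to `c` among the nonnegative
vectors with the same total mass as `f`. It remains to see that `θ = γ_{k*}` gives mass `1`: the
sorted values `a_i` exceed `γ_{k*}` exactly for `i ≤ k*`, because `a_{k*+1} ≤ γ_{k*+1}` and
`(k* + 1) γ_{k*+1} = k* γ_{k*} + a_{k*+1}` force `a_{k*+1} ≤ γ_{k*}`. Then the mass is
`a_1 + ⋯ + a_{k*} - k* γ_{k*} = 1`.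
-/

open Finset

theorem sq_max_sub_sub_le (c θ z : ℝ) (hz : 0 ≤ z) :
    (max (c - θ) 0 - c) ^ 2 ≤ (z - c) ^ 2 + 2 * θ * (z - max (c - θ) 0) := by
  rcases le_total (c - θ) 0 with h | h
  · rw [max_eq_right h]
    nlinarith
  · rw [max_eq_left h]
    nlinarith [sq_nonneg (z - c + θ)]

theorem sum_sq_max_sub_sub_le {ι : Type*} [Fintype ι] (c z : ι → ℝ) (θ : ℝ)
    (hz : ∀ s, 0 ≤ z s) (hmass : ∑ s, z s = ∑ s, max (c s - θ) 0) :
    ∑ s, (max (c s - θ) 0 - c s) ^ 2 ≤ ∑ s, (z s - c s) ^ 2 := by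
  calc ∑ s, (max (c s - θ) 0 - c s) ^ 2
      ≤ ∑ s, ((z s - c s) ^ 2 + 2 * θ * (z s - max (c s - θ) 0)) :=
        sum_le_sum fun s _ => sq_max_sub_sub_le (c s) θ (z s) (hz s)
    _ = ∑ s, (z s - c s) ^ 2 + 2 * θ * (∑ s, z s - ∑ s, max (c s - θ) 0) := by
        rw [sum_add_distrib, ← sum_sub_distrib, mul_sum]
    _ = ∑ s, (z s - c s) ^ 2 := by rw [hmass, sub_self, mul_zero, add_zero]

theorem sum_max_sub_eq_of_lt_iff_mem {ι : Type*} [Fintype ι] (a : ι → ℝ) (θ : ℝ)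
    (S : Finset ι) (hS : ∀ i, θ < a i ↔ i ∈ S) :
    ∑ i, max (a i - θ) 0 = ∑ i ∈ S, a i - #S * θ := by
  rw [← sum_subset (subset_univ S) fun i _ hi => max_eq_right (by linarith [(hS i).not.2 hi]),
    sum_congr rfl fun i hi => max_eq_left (by linarith [(hS i).2 hi]), sum_sub_distrib,
    sum_const, nsmul_eq_mul]

theorem le_threshold_of_lt_last {d : ℕ} {a γ : Fin d → ℝ} (ha : Antitone a)
    (hγ : ∀ k : Fin d, γ k = (∑ i ∈ Iic k, a i - 1) / ((k : ℕ) + 1))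
    {kstar : Fin d} (hmax : ∀ k, γ k < a k → k ≤ kstar) {j : Fin d} (hj : kstar < j) :
    a j ≤ γ kstar := by
  have hj' : (kstar : ℕ) < j := hj
  set k' : Fin d := ⟨kstar + 1, by omega⟩
  have hIic : Iic k' = insert k' (Iic kstar) := by
    ext i
    simp only [mem_Iic, mem_insert, Fin.le_def, Fin.ext_iff, k']
    omega
  have hrec : ((kstar : ℕ) + 2) * γ k' = ((kstar : ℕ) + 1) * γ kstar + a k' := by
    rw [hγ k', hγ kstar, hIic, sum_insert (by simp [Fin.le_def, k'])]
    field_simp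
    push_cast [k']
    ring
  have hk' : a k' ≤ γ k' := not_lt.1 fun h => absurd (hmax k' h) (by simp [Fin.le_def, k'])
  have hk'_le_j : k' ≤ j := Fin.le_def.2 (by simp [k']; omega)
  have : a k' ≤ γ kstar := by nlinarith [(kstar : ℕ).cast_nonneg (α := ℝ)]
  exact (ha hk'_le_j).trans this

theorem simplex_projection_formula_general {d : ℕ}
    (c : Fin d → ℝ) (π : Equiv.Perm (Fin d))
    (hsort : ∀ i j : Fin d, i ≤ j → c (π j) ≤ c (π i))
    (γ : Fin d → ℝ)
    (hγ : ∀ k : Fin d,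
      γ k = ((∑ i : Fin d, if i ≤ k then c (π i) else 0) - 1) / ((k : ℕ) + 1))
    (kstar : Fin d)
    (hk1 : γ kstar < c (π kstar))
    (hk2 : ∀ k : Fin d, γ k < c (π k) → k ≤ kstar) :
    (∀ s, 0 ≤ max (c s - γ kstar) 0) ∧
    (∑ s, max (c s - γ kstar) 0) = 1 ∧
    ∀ z : Fin d → ℝ, (∀ s, 0 ≤ z s) → (∑ s, z s = 1) →
      ∑ s, (max (c s - γ kstar) 0 - c s) ^ 2 ≤ ∑ s, (z s - c s) ^ 2 := by
  have hγ' : ∀ k : Fin d, γ k = (∑ i ∈ Iic k, c (π i) - 1) / ((k : ℕ) + 1) := by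
    simpa only [← sum_filter, filter_ge_eq_Iic] using hγ
  have hlt_iff : ∀ i, γ kstar < c (π i) ↔ i ∈ Iic kstar := fun i =>
    ⟨fun h => mem_Iic.2 (not_lt.1 fun hi =>
        (le_threshold_of_lt_last (a := c ∘ π) (fun i j => hsort i j) hγ' hk2 hi).not_gt h),
      fun hi => hk1.trans_le (hsort i kstar (mem_Iic.1 hi))⟩
  have hmass : ∑ s, max (c s - γ kstar) 0 = 1 := by
    rw [← Equiv.sum_comp π, sum_max_sub_eq_of_lt_iff_mem _ _ _ hlt_iff, Fin.card_Iic, hγ' kstar]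
    push_cast
    field_simp
    ring
  exact ⟨fun _ => le_max_right _ _, hmass, fun z hz hz1 =>
    sum_sq_max_sub_sub_le c z _ hz (hz1.trans hmass.symm)⟩

/-- Euclidean projection onto the probability simplex: the sorting-based
threshold formula `z* = max(c - γ_{k*}, 0)`. -/
theorem simplex_projection_formula {d : ℕ} (hd : 0 < d)
    (c : Fin d → ℝ) (π : Equiv.Perm (Fin d))
    (hsort : ∀ i j : Fin d, i ≤ j → c (π j) ≤ c (π i))
    (γ : Fin d → ℝ)
    (hγ : ∀ k : Fin d,
      γ k = ((∑ i : Fin d, if i ≤ k then c (π i) else 0) - 1) / ((k : ℕ) + 1))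
    (kstar : Fin d)
    (hk1 : γ kstar < c (π kstar))
    (hk2 : ∀ k : Fin d, γ k < c (π k) → k ≤ kstar) :
    (∀ s, 0 ≤ max (c s - γ kstar) 0) ∧
    (∑ s, max (c s - γ kstar) 0) = 1 ∧
    ∀ z : Fin d → ℝ, (∀ s, 0 ≤ z s) → (∑ s, z s = 1) →
      ∑ s, (max (c s - γ kstar) 0 - c s) ^ 2 ≤ ∑ s, (z s - c s) ^ 2 :=
  simplex_projection_formula_general c π hsort γ hγ kstar hk1 hk2
end
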